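/- arXiv:2002.11068 — 2 statements merged into one kernel-verified Lean document; each statement's English description precedes it below -/
import Mathlib

section
/- Let α > 0 be such that θ(x) ≤ (1 + α)·x for all x > 0. Let ε : [7,∞) → (0,∞) be a function such that for every t ≥ 7 one has ψ(x) − x ≤ ε(t)·x for all x ≥ e^t. Assume there exists x₁ ≥ e⁷ such that θ(x) < x for all 0 < x ≤ x₁. Let b ≥ 7. Then for all x ≥ e^b one has ψ(x) − θ(x) < a₁·x^{1/2} + a₂·x^{1/3}, where a₁ = 1 + ε(log x₁) if b ≤ 2·log x₁ and a₁ = 1 + ε(b/2) if b > 2·log x₁, and a₂ = (1 + α)·max( f(e^b), f(2^{⌊b/log 2⌋ + 1}) ). -/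
/-- Chebyshev theta function: `θ(x) = ∑_{p ≤ x, p prime} log p`. -/
noncomputable def chebTheta (x : ℝ) : ℝ :=
  ∑ p ∈ (Finset.range (⌊x⌋₊ + 1)).filter Nat.Prime, Real.log p

/-- Chebyshev psi function: `ψ(x) = ∑_{n ≤ x} Λ(n)`. -/
noncomputable def chebPsi (x : ℝ) : ℝ :=
  ∑ n ∈ Finset.range (⌊x⌋₊ + 1), ArithmeticFunction.vonMangoldt n


/-- The function `f(x) = ∑_{k=3}^{⌊log x / log 2⌋} x^(1/k - 1/3)`. -/
noncomputable def auxF (x : ℝ) : ℝ :=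
  ∑ k ∈ Finset.Icc 3 ⌊Real.log x / Real.log 2⌋₊, x ^ ((k : ℝ)⁻¹ - (3 : ℝ)⁻¹)

/-!
By `ψ x = ∑_{k ≤ log x / log 2} θ (x ^ (1 / k))`, `ψ x - θ x` is `θ (√x)` plus the terms
with `k ≥ 3`. The term `θ (√x)` is controlled by `θ y < y` below `x₁` and by
`ψ y - y ≤ ε t * y` above `e ^ t`, strictly because `θ y < ψ y` once `y ≥ 4`. Each term with
`k ≥ 3` is at most `(1 + α) x ^ (1 / k)`, and these add up to `(1 + α) x ^ (1 / 3) f x`.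
Finally `f` decreases on every block `[2 ^ K, 2 ^ (K + 1))` (the index range is constant there),
and `f (2 ^ K)` decreases in `K` for `K ≥ 11`, so on `[e ^ b, ∞)` it is bounded by its value at
`e ^ b` or at the first power of two beyond `e ^ b`.
-/

open Finset Real Chebyshev

lemma chebTheta_eq_theta : chebTheta = θ := by
  ext x
  rw [chebTheta, theta_eq_sum_Icc, Nat.range_succ_eq_Icc_zero]

lemma chebPsi_eq_psi : chebPsi = ψ := by
  ext x
  rw [chebPsi, psi_eq_sum_Icc, Nat.range_succ_eq_Icc_zero]

namespace Chebyshev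

lemma two_le_floor_log_div_log_two {x : ℝ} (hx : 4 ≤ x) : 2 ≤ ⌊log x / log 2⌋₊ := by
  have hx0 : 0 ≤ log x / log 2 := div_nonneg (log_nonneg (by linarith)) (log_nonneg one_le_two)
  rw [Nat.le_floor_iff hx0, le_div_iff₀ (log_pos one_lt_two), Nat.cast_ofNat,
    ← log_rpow two_pos]
  exact log_le_log (by positivity) (by norm_num; linarith)

theorem theta_lt_psi {x : ℝ} (hx : 4 ≤ x) : θ x < ψ x := by
  rw [psi_eq_theta_add_sum_theta (by linarith), lt_add_iff_pos_right]
  refine sum_pos' (fun _ _ ↦ theta_nonneg _) ⟨2, ?_, theta_pos ?_⟩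
  · simpa using two_le_floor_log_div_log_two hx
  · rw [Nat.cast_ofNat, ← sqrt_eq_rpow, le_sqrt (by norm_num) (by linarith)]
    linarith

theorem psi_sub_theta_eq_theta_sqrt_add_sum {x : ℝ} (hx : 4 ≤ x) :
    ψ x - θ x = θ (x ^ ((1 : ℝ) / 2)) +
      ∑ k ∈ Icc 3 ⌊log x / log 2⌋₊, θ (x ^ ((1 : ℝ) / k)) := by
  rw [psi_eq_theta_add_sum_theta (by linarith), add_sub_cancel_left,
    ← add_sum_Ioc_eq_sum_Icc (two_le_floor_log_div_log_two hx)]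
  rfl

lemma theta_lt_of_psi_sub_le {y e : ℝ} (hy : 4 ≤ y) (h : ψ y - y ≤ e * y) :
    θ y < (1 + e) * y := by
  linarith [theta_lt_psi hy]

lemma theta_lt_mul_of_exp_div_two_le (ε : ℝ → ℝ) (hεpos : ∀ t : ℝ, t ≥ 7 → ε t > 0)
    (hε : ∀ t : ℝ, t ≥ 7 → ∀ x : ℝ, x ≥ exp t → ψ x - x ≤ ε t * x)
    {x₁ : ℝ} (hx₁ : x₁ ≥ exp 7) (hθ : ∀ x : ℝ, 0 < x → x ≤ x₁ → θ x < x)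
    {b y : ℝ} (hy : exp (b / 2) ≤ y) :
    θ y < (if b ≤ 2 * log x₁ then 1 + ε (log x₁) else 1 + ε (b / 2)) * y := by
  have hx₁pos : 0 < x₁ := (exp_pos 7).trans_le hx₁
  have hlogx₁ : 7 ≤ log x₁ := (le_log_iff_exp_le hx₁pos).2 hx₁
  have h4 : (4 : ℝ) ≤ exp 7 := by linarith [add_one_le_exp (7 : ℝ)]
  split_ifs with hb
  · rcases le_or_gt y x₁ with hyx₁ | hx₁y
    · have hy0 : 0 < y := (exp_pos _).trans_le hy
      nlinarith [hθ y hy0 hyx₁, hεpos _ hlogx₁]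
    · exact theta_lt_of_psi_sub_le (by linarith)
        (hε _ hlogx₁ y (by rw [exp_log hx₁pos]; exact hx₁y.le))
  · have hb7 : 7 ≤ b / 2 := by linarith
    exact theta_lt_of_psi_sub_le (h4.trans ((exp_le_exp.2 hb7).trans hy)) (hε _ hb7 y hy)

end Chebyshev

lemma sum_rpow_one_div_eq_mul_auxF {x : ℝ} (hx : 0 < x) :
    ∑ k ∈ Icc 3 ⌊log x / log 2⌋₊, x ^ ((1 : ℝ) / k) = x ^ ((1 : ℝ) / 3) * auxF x := by
  rw [auxF, mul_sum]
  refine sum_congr rfl fun k _ ↦ ?_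
  rw [← rpow_add hx]
  ring_nf

lemma floor_log_two_pow_div_log_two (m : ℕ) : ⌊log ((2 : ℝ) ^ m) / log 2⌋₊ = m := by
  rw [log_pow, mul_div_cancel_right₀ _ (log_pos one_lt_two).ne', Nat.floor_natCast]

lemma two_pow_floor_log_div_log_two_le {x : ℝ} (hx : 1 ≤ x) :
    (2 : ℝ) ^ ⌊log x / log 2⌋₊ ≤ x := by
  have h := Nat.floor_le (div_nonneg (log_nonneg hx) (log_nonneg one_le_two))
  rw [le_div_iff₀ (log_pos one_lt_two), ← log_pow] at h
  exact (log_le_log_iff (by positivity) (by linarith)).1 h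

lemma auxF_le_auxF_of_floor_eq {x y : ℝ} (hy : 0 < y) (hyx : y ≤ x)
    (h : ⌊log y / log 2⌋₊ = ⌊log x / log 2⌋₊) : auxF x ≤ auxF y := by
  rw [auxF, auxF, h]
  refine sum_le_sum fun k hk ↦ rpow_le_rpow_of_nonpos hy hyx ?_
  have hk : (3 : ℝ) ≤ k := by exact_mod_cast (mem_Icc.1 hk).1
  exact sub_nonpos.2 (inv_anti₀ (by norm_num) hk)

lemma two_pow_rpow_one_div_self {n : ℕ} (hn : n ≠ 0) :
    ((2 : ℝ) ^ n) ^ ((1 : ℝ) / n) = 2 := by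
  rw [← rpow_natCast, ← rpow_mul zero_le_two, mul_one_div_cancel (by exact_mod_cast hn),
    rpow_one]

lemma two_pow_le_two_pow_rpow_one_div {j k m : ℕ} (hk : 0 < k) (h : j * k ≤ m) :
    (2 : ℝ) ^ j ≤ ((2 : ℝ) ^ m) ^ ((1 : ℝ) / k) := by
  rw [one_div, le_rpow_inv_iff_of_pos (by positivity) (by positivity) (by exact_mod_cast hk),
    rpow_natCast, ← pow_mul]
  exact pow_le_pow_right₀ one_le_two h

lemma two_rpow_one_div_le {j k : ℕ} (hj : 0 < j) (hjk : j ≤ k) :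
    (2 : ℝ) ^ ((1 : ℝ) / k) ≤ 2 ^ ((1 : ℝ) / j) :=
  rpow_le_rpow_of_exponent_le one_le_two
    (one_div_le_one_div_of_le (by exact_mod_cast hj) (by exact_mod_cast hjk))

lemma le_two_rpow_one_div_three : (1.259 : ℝ) ≤ 2 ^ ((1 : ℝ) / 3) := by
  rw [one_div, le_rpow_inv_iff_of_pos (by norm_num) (by norm_num) (by norm_num),
    show (3 : ℝ) = (3 : ℕ) by norm_num, rpow_natCast]
  norm_num

lemma two_rpow_one_div_four_le : (2 : ℝ) ^ ((1 : ℝ) / 4) ≤ 1.1893 := by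
  rw [one_div, rpow_inv_le_iff_of_pos (by norm_num) (by norm_num) (by norm_num),
    show (4 : ℝ) = (4 : ℕ) by norm_num, rpow_natCast]
  norm_num

lemma two_rpow_one_div_six_le : (2 : ℝ) ^ ((1 : ℝ) / 6) ≤ 1.1225 := by
  rw [one_div, rpow_inv_le_iff_of_pos (by norm_num) (by norm_num) (by norm_num),
    show (6 : ℝ) = (6 : ℕ) by norm_num, rpow_natCast]
  norm_num

/-- Passing from `∑ k ∈ Icc 3 m, (2 ^ m) ^ (1 / k)` to the sum for `m + 1` adds the term
`(2 ^ (m + 1)) ^ (1 / (m + 1)) = 2`; it is absorbed by the gaps `2 ^ (1 / 3) - 2 ^ (1 / k)`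
of the terms with `4 ≤ k ≤ 11`. -/
lemma two_le_sum_gap {m : ℕ} (hm : 11 ≤ m) :
    2 ≤ ∑ k ∈ Icc 3 m,
      (2 ^ ((1 : ℝ) / 3) - 2 ^ ((1 : ℝ) / k)) * ((2 : ℝ) ^ m) ^ ((1 : ℝ) / k) := by
  set g : ℕ → ℝ := fun k ↦
    (2 ^ ((1 : ℝ) / 3) - 2 ^ ((1 : ℝ) / k)) * ((2 : ℝ) ^ m) ^ ((1 : ℝ) / k)
  have hg_nonneg : ∀ k ∈ Icc 3 m, 0 ≤ g k := fun k hk ↦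
    mul_nonneg (sub_nonneg.2 (two_rpow_one_div_le three_pos (mem_Icc.1 hk).1)) (by positivity)
  have hg_small :
      ∀ k ∈ Ico 4 6, (2 ^ ((1 : ℝ) / 3) - 2 ^ ((1 : ℝ) / 4)) * 2 ^ 2 ≤ g k := by
    intro k hk
    obtain ⟨hk4, hk6⟩ := mem_Ico.1 hk
    exact mul_le_mul (by linarith [two_rpow_one_div_le four_pos hk4])
      (two_pow_le_two_pow_rpow_one_div (by omega) (by omega)) (by positivity)
      (sub_nonneg.2 (two_rpow_one_div_le (j := 3) (by norm_num) (by omega)))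
  have hg_large :
      ∀ k ∈ Ico 6 12, (2 ^ ((1 : ℝ) / 3) - 2 ^ ((1 : ℝ) / 6)) * 2 ^ 1 ≤ g k := by
    intro k hk
    obtain ⟨hk6, hk12⟩ := mem_Ico.1 hk
    exact mul_le_mul (by linarith [two_rpow_one_div_le (by norm_num : 0 < 6) hk6])
      (two_pow_le_two_pow_rpow_one_div (by omega) (by omega)) (by positivity)
      (sub_nonneg.2 (two_rpow_one_div_le (j := 3) (by norm_num) (by omega)))
  calc (2 : ℝ)
      ≤ 2 * ((2 ^ ((1 : ℝ) / 3) - 2 ^ ((1 : ℝ) / 4)) * 2 ^ 2)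
        + 6 * ((2 ^ ((1 : ℝ) / 3) - 2 ^ ((1 : ℝ) / 6)) * 2 ^ 1) := by
        linarith [le_two_rpow_one_div_three, two_rpow_one_div_four_le, two_rpow_one_div_six_le]
    _ ≤ ∑ k ∈ Ico 4 6, g k + ∑ k ∈ Ico 6 12, g k := by
        gcongr
        · simpa using card_nsmul_le_sum _ _ _ hg_small
        · simpa using card_nsmul_le_sum _ _ _ hg_large
    _ = ∑ k ∈ Ico 4 12, g k := sum_Ico_consecutive g (by norm_num) (by norm_num)
    _ ≤ ∑ k ∈ Icc 3 m, g k := sum_le_sum_of_subset_of_nonneg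
        (fun k hk ↦ by simp only [mem_Ico, mem_Icc] at hk ⊢; omega)
        fun k hk _ ↦ hg_nonneg k hk

lemma sum_two_pow_rpow_one_div (n : ℕ) :
    ∑ k ∈ Icc 3 n, ((2 : ℝ) ^ n) ^ ((1 : ℝ) / k) =
      ((2 : ℝ) ^ n) ^ ((1 : ℝ) / 3) * auxF (2 ^ n) := by
  rw [← sum_rpow_one_div_eq_mul_auxF (by positivity), floor_log_two_pow_div_log_two]

lemma auxF_two_pow_succ_le {m : ℕ} (hm : 11 ≤ m) : auxF (2 ^ (m + 1)) ≤ auxF (2 ^ m) := by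
  have hsplit : ∀ r : ℝ, ((2 : ℝ) ^ (m + 1)) ^ r = 2 ^ r * ((2 : ℝ) ^ m) ^ r := fun r ↦ by
    rw [pow_succ', mul_rpow zero_le_two (by positivity)]
  have hgap := two_le_sum_gap hm
  simp only [sub_mul, sum_sub_distrib, ← mul_sum] at hgap
  refine le_of_mul_le_mul_left ?_
    (by positivity : (0 : ℝ) < ((2 : ℝ) ^ (m + 1)) ^ ((1 : ℝ) / 3))
  calc ((2 : ℝ) ^ (m + 1)) ^ ((1 : ℝ) / 3) * auxF (2 ^ (m + 1))
      = ∑ k ∈ Icc 3 m, 2 ^ ((1 : ℝ) / k) * ((2 : ℝ) ^ m) ^ ((1 : ℝ) / k) + 2 := by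
        rw [← sum_two_pow_rpow_one_div, sum_Icc_succ_top (by omega),
          two_pow_rpow_one_div_self (by omega)]
        simp only [hsplit]
    _ ≤ 2 ^ ((1 : ℝ) / 3) * ∑ k ∈ Icc 3 m, ((2 : ℝ) ^ m) ^ ((1 : ℝ) / k) := by linarith
    _ = ((2 : ℝ) ^ (m + 1)) ^ ((1 : ℝ) / 3) * auxF (2 ^ m) := by
        rw [sum_two_pow_rpow_one_div, hsplit, mul_assoc]

lemma auxF_two_pow_le_of_le {m n : ℕ} (hm : 11 ≤ m) (hmn : m ≤ n) :
    auxF (2 ^ n) ≤ auxF (2 ^ m) := by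
  induction n, hmn using Nat.le_induction with
  | base => rfl
  | succ n hmn ih => exact (auxF_two_pow_succ_le (hm.trans hmn)).trans ih

lemma auxF_le_max {b x : ℝ} (hb : 7 ≤ b) (hx : exp b ≤ x) :
    auxF x ≤ max (auxF (exp b)) (auxF ((2 : ℝ) ^ (⌊b / log 2⌋₊ + 1))) := by
  have hlog2 : 0 < log 2 := log_pos one_lt_two
  have hx1 : 1 ≤ x := (one_le_exp (by linarith)).trans hx
  have hK₀ : ⌊log (exp b) / log 2⌋₊ = ⌊b / log 2⌋₊ := by rw [log_exp]
  have hK₀K : ⌊b / log 2⌋₊ ≤ ⌊log x / log 2⌋₊ :=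
    Nat.floor_le_floor (div_le_div_of_nonneg_right ((le_log_iff_exp_le (by linarith)).2 hx)
      hlog2.le)
  rcases hK₀K.eq_or_lt with heq | hlt
  · exact le_max_of_le_left (auxF_le_auxF_of_floor_eq (exp_pos b) hx (hK₀.trans heq))
  · refine le_max_of_le_right ((auxF_le_auxF_of_floor_eq (by positivity)
      (two_pow_floor_log_div_log_two_le hx1) (floor_log_two_pow_div_log_two _)).trans
      (auxF_two_pow_le_of_le ?_ hlt))
    have : 10 ≤ ⌊b / log 2⌋₊ := Nat.le_floor <| by
      rw [le_div_iff₀ hlog2]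
      push_cast
      linarith [log_two_lt_d9]
    omega

lemma sum_theta_rpow_one_div_le {α x : ℝ} (hθα : ∀ x : ℝ, x > 0 → θ x ≤ (1 + α) * x)
    (hx : 0 < x) :
    ∑ k ∈ Icc 3 ⌊log x / log 2⌋₊, θ (x ^ ((1 : ℝ) / k)) ≤
      (1 + α) * (x ^ ((1 : ℝ) / 3) * auxF x) := by
  rw [← sum_rpow_one_div_eq_mul_auxF hx, mul_sum]
  exact sum_le_sum fun k _ ↦ hθα _ (by positivity)

theorem statement7_general (α : ℝ)
    (hθα : ∀ x : ℝ, x > 0 → chebTheta x ≤ (1 + α) * x)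
    (ε : ℝ → ℝ) (hεpos : ∀ t : ℝ, t ≥ 7 → ε t > 0)
    (hε : ∀ t : ℝ, t ≥ 7 → ∀ x : ℝ, x ≥ Real.exp t → chebPsi x - x ≤ ε t * x)
    (x₁ : ℝ) (hx₁ : x₁ ≥ Real.exp 7)
    (hθ : ∀ x : ℝ, 0 < x → x ≤ x₁ → chebTheta x < x)
    (b : ℝ) (hb : b ≥ 7) :
    ∀ x : ℝ, x ≥ Real.exp b →
      chebPsi x - chebTheta x <
        (if b ≤ 2 * Real.log x₁ then 1 + ε (Real.log x₁) else 1 + ε (b / 2)) *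
            x ^ ((1 : ℝ) / 2) +
          ((1 + α) *
            max (auxF (Real.exp b)) (auxF ((2 : ℝ) ^ (⌊b / Real.log 2⌋₊ + 1)))) *
            x ^ ((1 : ℝ) / 3) := by
  rw [chebTheta_eq_theta] at hθα hθ ⊢
  rw [chebPsi_eq_psi] at hε ⊢
  intro x hx
  have hx0 : 0 < x := (exp_pos b).trans_le hx
  have hα : 0 < 1 + α := by nlinarith [hθα 2 two_pos, theta_pos (le_refl (2 : ℝ))]
  have hsqrt : exp (b / 2) ≤ x ^ ((1 : ℝ) / 2) := by
    rw [div_eq_mul_one_div, exp_mul]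
    exact rpow_le_rpow (exp_pos b).le hx (by norm_num)
  have hsqrt_bound := theta_lt_mul_of_exp_div_two_le ε hεpos hε hx₁ hθ hsqrt
  have htail := sum_theta_rpow_one_div_le hθα hx0
  have hauxF := mul_le_mul_of_nonneg_left (auxF_le_max hb hx)
    (by positivity : 0 ≤ (1 + α) * x ^ ((1 : ℝ) / 3))
  rw [psi_sub_theta_eq_theta_sqrt_add_sum (by linarith [add_one_le_exp b])]
  linarith

theorem statement7 (α : ℝ) (hα : α > 0)
    (hθα : ∀ x : ℝ, x > 0 → chebTheta x ≤ (1 + α) * x)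
    (ε : ℝ → ℝ) (hεpos : ∀ t : ℝ, t ≥ 7 → ε t > 0)
    (hε : ∀ t : ℝ, t ≥ 7 → ∀ x : ℝ, x ≥ Real.exp t → chebPsi x - x ≤ ε t * x)
    (x₁ : ℝ) (hx₁ : x₁ ≥ Real.exp 7)
    (hθ : ∀ x : ℝ, 0 < x → x ≤ x₁ → chebTheta x < x)
    (b : ℝ) (hb : b ≥ 7) :
    ∀ x : ℝ, x ≥ Real.exp b →
      chebPsi x - chebTheta x <
        (if b ≤ 2 * Real.log x₁ then 1 + ε (Real.log x₁) else 1 + ε (b / 2)) *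
            x ^ ((1 : ℝ) / 2) +
          ((1 + α) *
            max (auxF (Real.exp b)) (auxF ((2 : ℝ) ^ (⌊b / Real.log 2⌋₊ + 1)))) *
            x ^ ((1 : ℝ) / 3) :=
  statement7_general α hθα ε hεpos hε x₁ hx₁ hθ b hb
end

section
/- Let k ∈ {1,2,3,4,5} and let b, b′ be reals with b′ > b ≥ 2k. Assume there exists ε > 0 such that |ψ(x) − x| ≤ ε·x for all x ∈ [e^b, e^{b′}], and assume a₁, a₂ ≥ 0 satisfy ψ(x) − θ(x) ≤ a₁·x^{1/2} + a₂·x^{1/3} for all x ≥ e^b. Then for all x ∈ [e^b, e^{b′}] one has |θ(x) − x| ≤ B_k(b,b′)·x/(log x)^k, where B_k(b,b′) = a₁·b^k·e^{−b/2} + a₂·b^k·e^{−2b/3} + (b′)^k·ε. -/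
/-!
Writing `θ(x) - x = (ψ(x) - x) - (ψ(x) - θ(x))` with `0 ≤ ψ(x) - θ(x)`, the error is at most
`ε x + a₁ x^{1/2} + a₂ x^{1/3}`. Multiplied by `(log x)^k`, the first term is at most `b'^k ε x`,
and `x^{1-c} (log x)^k = x · L^k e^{-cL}` with `L = log x ≥ b`; since `t ↦ t^k e^{-ct}` decreases
for `t ≥ k / c`, and `b ≥ 2k` makes this hold for `c = 1/2` and `c = 2/3`, the other two terms
are at most `b^k e^{-cb} x`.
-/

open Real

lemma chebTheta_le_chebPsi (x : ℝ) : chebTheta x ≤ chebPsi x := by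
  unfold chebTheta chebPsi
  rw [Finset.sum_congr rfl fun p hp =>
    (ArithmeticFunction.vonMangoldt_apply_prime (Finset.mem_filter.mp hp).2).symm]
  exact Finset.sum_le_sum_of_subset_of_nonneg (Finset.filter_subset _ _)
    fun n _ _ => ArithmeticFunction.vonMangoldt_nonneg

lemma abs_chebTheta_sub_le (x : ℝ) :
    |chebTheta x - x| ≤ |chebPsi x - x| + (chebPsi x - chebTheta x) :=
  calc |chebTheta x - x| = |(chebPsi x - x) - (chebPsi x - chebTheta x)| := by
        rw [sub_sub_sub_cancel_left]
    _ ≤ |chebPsi x - x| + |chebPsi x - chebTheta x| := abs_sub _ _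
    _ = |chebPsi x - x| + (chebPsi x - chebTheta x) := by
        rw [abs_of_nonneg (sub_nonneg.mpr (chebTheta_le_chebPsi x))]

lemma pow_mul_exp_neg_mul_le_of_le {k : ℕ} {c b L : ℝ} (hb : 0 < b) (hkb : k ≤ c * b)
    (hbL : b ≤ L) : L ^ k * exp (-(c * L)) ≤ b ^ k * exp (-(c * b)) := by
  have hL : L ≤ b * exp ((L - b) / b) :=
    calc L = b * ((L - b) / b + 1) := by field_simp; ring
      _ ≤ b * exp ((L - b) / b) := by gcongr; exact add_one_le_exp _
  have hexponent : k * ((L - b) / b) ≤ c * (L - b) := by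
    rw [mul_div_assoc', div_le_iff₀ hb]
    nlinarith [mul_le_mul_of_nonneg_right hkb (sub_nonneg.mpr hbL)]
  calc L ^ k * exp (-(c * L)) ≤ (b * exp ((L - b) / b)) ^ k * exp (-(c * L)) := by
        gcongr; linarith
    _ = b ^ k * exp (k * ((L - b) / b) + -(c * L)) := by
        rw [mul_pow, ← exp_nat_mul, mul_assoc, exp_add]
    _ ≤ b ^ k * exp (c * (L - b) + -(c * L)) := by gcongr
    _ = b ^ k * exp (-(c * b)) := by ring_nf

lemma rpow_one_sub_mul_log_pow_le {k : ℕ} {c b x : ℝ} (hb : 0 < b) (hkb : k ≤ c * b)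
    (hx : exp b ≤ x) : x ^ (1 - c) * log x ^ k ≤ b ^ k * exp (-(c * b)) * x := by
  have hx0 : 0 < x := (exp_pos b).trans_le hx
  have hbL : b ≤ log x := (le_log_iff_exp_le hx0).mpr hx
  calc x ^ (1 - c) * log x ^ k = x * (log x ^ k * exp (-(c * log x))) := by
        rw [rpow_def_of_pos hx0, show log x * (1 - c) = log x + -(c * log x) by ring, exp_add,
          exp_log hx0]
        ring
    _ ≤ x * (b ^ k * exp (-(c * b))) :=
        mul_le_mul_of_nonneg_left (pow_mul_exp_neg_mul_le_of_le hb hkb hbL) hx0.le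
    _ = b ^ k * exp (-(c * b)) * x := mul_comm _ _

theorem statement10_general (k : ℕ) (hk1 : 1 ≤ k)
    (b b' : ℝ) (hb : 2 * (k : ℝ) ≤ b)
    (ε : ℝ) (hε : ε > 0)
    (hψ : ∀ x : ℝ, Real.exp b ≤ x → x ≤ Real.exp b' → |chebPsi x - x| ≤ ε * x)
    (a₁ a₂ : ℝ) (ha₁ : 0 ≤ a₁) (ha₂ : 0 ≤ a₂)
    (hψθ : ∀ x : ℝ, x ≥ Real.exp b →
      chebPsi x - chebTheta x ≤ a₁ * x ^ ((1 : ℝ) / 2) + a₂ * x ^ ((1 : ℝ) / 3)) :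
    ∀ x : ℝ, Real.exp b ≤ x → x ≤ Real.exp b' →
      |chebTheta x - x| ≤
        (a₁ * b ^ k * Real.exp (-b / 2) + a₂ * b ^ k * Real.exp (-2 * b / 3)
            + b' ^ k * ε) * x / (Real.log x) ^ k := by
  intro x hxb hxb'
  have hb0 : 0 < b := by linarith [show (1 : ℝ) ≤ k by exact_mod_cast hk1]
  have hx0 : 0 < x := (exp_pos b).trans_le hxb
  have hlog : b ≤ log x := (le_log_iff_exp_le hx0).mpr hxb
  have hlog' : log x ≤ b' := (log_le_iff_le_exp hx0).mpr hxb'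
  have hsqrt : x ^ ((1 : ℝ) / 2) * log x ^ k ≤ b ^ k * exp (-b / 2) * x := by
    convert rpow_one_sub_mul_log_pow_le (k := k) (c := 1 / 2) hb0 (by linarith) hxb using 4 <;> ring_nf
  have hcbrt : x ^ ((1 : ℝ) / 3) * log x ^ k ≤ b ^ k * exp (-2 * b / 3) * x := by
    convert rpow_one_sub_mul_log_pow_le (k := k) (c := 2 / 3) hb0 (by linarith) hxb using 4 <;> ring_nf
  have hlog_pow : 0 < log x ^ k := pow_pos (hb0.trans_le hlog) k
  rw [le_div_iff₀ hlog_pow]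
  calc |chebTheta x - x| * log x ^ k
      ≤ (ε * x + (a₁ * x ^ ((1 : ℝ) / 2) + a₂ * x ^ ((1 : ℝ) / 3))) * log x ^ k := by
        refine mul_le_mul_of_nonneg_right ?_ hlog_pow.le
        exact (abs_chebTheta_sub_le x).trans (add_le_add (hψ x hxb hxb') (hψθ x hxb))
    _ = ε * x * log x ^ k + a₁ * (x ^ ((1 : ℝ) / 2) * log x ^ k)
          + a₂ * (x ^ ((1 : ℝ) / 3) * log x ^ k) := by ring
    _ ≤ ε * x * b' ^ k + a₁ * (b ^ k * exp (-b / 2) * x) + a₂ * (b ^ k * exp (-2 * b / 3) * x) := by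
        gcongr
        exact hb0.le.trans hlog
    _ = _ := by ring

theorem statement10 (k : ℕ) (hk1 : 1 ≤ k) (hk5 : k ≤ 5)
    (b b' : ℝ) (hbb' : b < b') (hb : 2 * (k : ℝ) ≤ b)
    (ε : ℝ) (hε : ε > 0)
    (hψ : ∀ x : ℝ, Real.exp b ≤ x → x ≤ Real.exp b' → |chebPsi x - x| ≤ ε * x)
    (a₁ a₂ : ℝ) (ha₁ : 0 ≤ a₁) (ha₂ : 0 ≤ a₂)
    (hψθ : ∀ x : ℝ, x ≥ Real.exp b →
      chebPsi x - chebTheta x ≤ a₁ * x ^ ((1 : ℝ) / 2) + a₂ * x ^ ((1 : ℝ) / 3)) :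
    ∀ x : ℝ, Real.exp b ≤ x → x ≤ Real.exp b' →
      |chebTheta x - x| ≤
        (a₁ * b ^ k * Real.exp (-b / 2) + a₂ * b ^ k * Real.exp (-2 * b / 3)
            + b' ^ k * ε) * x / (Real.log x) ^ k :=
  statement10_general k hk1 b b' hb ε hε hψ a₁ a₂ ha₁ ha₂ hψθ
end
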